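/- arXiv:math/9803133 — 2 statements merged into one kernel-verified Lean document; each statement's English description precedes it below -/
import Mathlib

section
/- For every t ∈ ℝ, every f ∈ 𝒞 and every k ∈ ℕ, the seminorm p_{f,k}(e^{itH_L} a e^{−itH_L} − e^{−it} a) tends to 0 as L → ∞. (In other words, the regularized Heisenberg dynamics α_L^t(a) = e^{itH_L} a e^{−itH_L} of the annihilation operator converges, in each seminorm of the physical topology τ, to the free evolution e^{−it} a.) -/
open Filter Topology
open scoped ENNReal

noncomputable section

/-- The boson Hilbert space `H = ℓ²(ℕ, ℂ)`. -/
abbrev Hb : Type := lp (fun _ : ℕ => ℂ) 2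

/-- The standard orthonormal basis vectors `e n` of `H`. -/
def eb (n : ℕ) : Hb := lp.single 2 n (1 : ℂ)

/-- The dense subspace `D` of finitely supported linear combinations of the `e n`,
modelled as finitely supported sequences. -/
abbrev Db : Type := ℕ →₀ ℂ

/-- The inclusion `D → H`. -/
def incl : Db →ₗ[ℂ] Hb := Finsupp.linearCombination ℂ eb

/-- The annihilation operator `a : D → D`, `a e₀ = 0`, `a eₙ = √n e_{n-1}`. -/
def aOp : Db →ₗ[ℂ] Db :=
  Finsupp.lsum ℂ fun n => (Real.sqrt n : ℂ) • Finsupp.lsingle (n - 1)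

/-- The creation operator `a† : D → D`, `a† eₙ = √(n+1) e_{n+1}`. -/
def adOp : Db →ₗ[ℂ] Db :=
  Finsupp.lsum ℂ fun n => (Real.sqrt (n + 1) : ℂ) • Finsupp.lsingle (n + 1)

/-- The number operator `N = a† a` on `D`. -/
def ND : Db →ₗ[ℂ] Db := adOp ∘ₗ aOp

/-- The projection `Π_l` restricted to `D`. -/
def PiD (l : ℕ) : Db →ₗ[ℂ] Db :=
  Finsupp.lsum ℂ fun n => if n = l then Finsupp.lsingle n else 0

/-- `Q_L = Σ_{l=0}^L Π_l` on `D`. -/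
def QD (L : ℕ) : Db →ₗ[ℂ] Db := ∑ l ∈ Finset.range (L + 1), PiD l

/-- The orthogonal projection `Π_l` of `H` onto `ℂ e_l`. -/
def PiH (l : ℕ) : Hb →L[ℂ] Hb := (innerSL ℂ (eb l)).smulRight (eb l)

/-- `Q_L = Σ_{l=0}^L Π_l` on `H`. -/
def QH (L : ℕ) : Hb →L[ℂ] Hb := ∑ l ∈ Finset.range (L + 1), PiH l

/-- For a linear map `T : D → H`, the bounded operator `Π_l T Π_s` on `H`
(it is `x ↦ ⟪e_s, x⟫ • Π_l (T e_s)`, of rank at most one). -/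
def sandwich (T : Db →ₗ[ℂ] Hb) (l s : ℕ) : Hb →L[ℂ] Hb :=
  (innerSL ℂ (eb s)).smulRight (PiH l (T (Finsupp.single s 1)))

/-- Membership in the set `𝒞` of positive, bounded, continuous functions on `[0,∞)`
decreasing faster than any inverse power. -/
structure IsC (f : ℝ → ℝ) : Prop where
  cont : ContinuousOn f (Set.Ici (0 : ℝ))
  bdd : ∃ B : ℝ, ∀ x ∈ Set.Ici (0 : ℝ), f x ≤ B
  pos : ∀ x ∈ Set.Ici (0 : ℝ), 0 < f x
  decay : ∀ n : ℕ, Tendsto (fun x : ℝ => x ^ n * f x) atTop (nhds 0)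

/-- The seminorm `p_{f,k}(T) = Σ_{l,s} f(l) s^k ‖Π_l T Π_s‖ ∈ [0,∞]`. -/
def semin (f : ℝ → ℝ) (k : ℕ) (T : Db →ₗ[ℂ] Hb) : ℝ≥0∞ :=
  ∑' (l : ℕ) (s : ℕ), ENNReal.ofReal (f l * (s : ℝ) ^ k * ‖sandwich T l s‖)

end

noncomputable section AuxLemmas

lemma inner_eb (m n : ℕ) : inner ℂ (eb m) (eb n) = if m = n then 1 else 0 := by
  rw [eb, eb, lp.inner_single_left, lp.single_apply]; simp [eq_comm, Pi.single_apply]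

lemma norm_eb (n : ℕ) : ‖eb n‖ = 1 := by
  have := lp.norm_single (p := 2) (E := fun _ : ℕ => ℂ) (by norm_num) n (1:ℂ)
  simpa [eb] using this

lemma incl_single (n : ℕ) (c : ℂ) : incl (Finsupp.single n c) = c • eb n := by
  simp [incl, Finsupp.linearCombination_single]

lemma orthonormal_eb : Orthonormal ℂ eb := by
  rw [orthonormal_iff_ite]
  intro i j; rw [inner_eb]

lemma incl_inj : Function.Injective incl :=
  orthonormal_eb.linearIndependent

lemma aOp_single (n : ℕ) :
    aOp (Finsupp.single n 1) = (Real.sqrt n : ℂ) • Finsupp.single (n-1) 1 := by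
  simp [aOp, Finsupp.lsum_single]

lemma QD_single (L n : ℕ) :
    QD L (Finsupp.single n 1) = if n ≤ L then Finsupp.single n 1 else 0 := by
  rw [QD]
  simp only [LinearMap.sum_apply, PiD, Finsupp.lsum_single, LinearMap.smul_apply]
  split_ifs with h
  · rw [Finset.sum_eq_single n]
    · simp
    · intro b _ hb; simp [Ne.symm hb]
    · intro hn; exact (hn (Finset.mem_range.2 (by omega))).elim
  · rw [Finset.sum_eq_zero]
    intro b hb
    have : b ≠ n := by rw [Finset.mem_range] at hb; omega
    simp [Ne.symm this]

lemma ND_single (n : ℕ) : ND (Finsupp.single n 1) = (n : ℂ) • Finsupp.single n 1 := by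
  rw [ND]
  simp only [LinearMap.comp_apply, aOp, adOp, Finsupp.lsum_single, LinearMap.smul_apply,
    map_smul]
  cases n with
  | zero => simp
  | succ m =>
    simp only [Nat.add_sub_cancel, Finsupp.lsum_single, LinearMap.smul_apply,
      Finsupp.lsingle_apply]
    rw [smul_smul]
    congr 1
    push_cast
    rw [← Complex.ofReal_mul, Real.mul_self_sqrt (by positivity)]
    push_cast; ring

lemma exp_eigen (A : Hb →L[ℂ] Hb) (x : Hb) (μ : ℂ) (h : A x = μ • x) :
    NormedSpace.exp A x = Complex.exp μ • x := by
  have hpow : ∀ n : ℕ, (A ^ n) x = μ ^ n • x := by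
    intro n
    induction n with
    | zero => simp
    | succ m ih =>
      rw [pow_succ, pow_succ, ContinuousLinearMap.mul_apply, h, map_smul, ih, smul_smul,
        mul_comm]
  have h1 : HasSum (fun n : ℕ => (((Nat.factorial n : ℂ))⁻¹ • A ^ n)) (NormedSpace.exp A) :=
    NormedSpace.exp_series_hasSum_exp' A
  have h2 : HasSum (fun n : ℕ => (((Nat.factorial n : ℂ))⁻¹ • A ^ n) x)
      (NormedSpace.exp A x) :=
    h1.map (ContinuousLinearMap.apply ℂ Hb x) (ContinuousLinearMap.apply ℂ Hb x).continuous
  have h3 : HasSum (fun n : ℕ => (((Nat.factorial n : ℂ))⁻¹ * μ ^ n) • x)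
      (NormedSpace.exp A x) := by
    simpa [hpow, smul_smul] using h2
  have h4 : HasSum (fun n : ℕ => (((Nat.factorial n : ℂ))⁻¹ • μ ^ n)) (NormedSpace.exp μ) :=
    NormedSpace.exp_series_hasSum_exp' μ
  have h5 := h4.smul_const x
  simp only [smul_eq_mul] at h5
  rw [← Complex.exp_eq_exp_ℂ] at h5
  exact h3.unique h5

lemma norm_sandwich (T : Db →ₗ[ℂ] Hb) (l s : ℕ) :
    ‖sandwich T l s‖ = ‖PiH l (T (Finsupp.single s 1))‖ := by
  rw [sandwich, ContinuousLinearMap.norm_smulRight_apply, innerSL_apply_norm, norm_eb, one_mul]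

lemma norm_PiH_smul_eb (l m : ℕ) (c : ℂ) :
    ‖PiH l (c • eb m)‖ = if l = m then ‖c‖ else 0 := by
  rw [PiH]
  simp only [map_smul, ContinuousLinearMap.smulRight_apply, innerSL_apply_apply]
  rw [inner_eb]
  split_ifs with h
  · simp [norm_smul, norm_eb]
  · simp

lemma sqrt_nat_le (s : ℕ) : Real.sqrt s ≤ s := by
  have h1 : (s:ℝ) ≤ (s:ℝ)^2 := by
    rcases Nat.eq_zero_or_pos s with h | h
    · simp [h]
    · have : (1:ℝ) ≤ (s:ℝ) := by exact_mod_cast h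
      nlinarith
  calc Real.sqrt s ≤ Real.sqrt ((s:ℝ)^2) := Real.sqrt_le_sqrt h1
    _ = s := Real.sqrt_sq (by positivity)

end AuxLemmas


noncomputable section

set_option maxHeartbeats 1000000 in
/-- the regularized Heisenberg dynamics `α_L^t(a) = e^{itH_L} a e^{-itH_L}`
converges, in every seminorm `p_{f,k}` of the physical topology `τ`, to `e^{-it} a`.
Here `HL L` is the bounded self-adjoint finite-rank extension of `H_L = Q_L N Q_L`
(characterized by agreeing with `Q_L N Q_L` on `D`), and `V L` is the restriction of the
unitary `e^{-itH_L}` to `D` (which maps `D` into `D`). -/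
theorem stmt0 (t : ℝ) (f : ℝ → ℝ) (hf : IsC f) (k : ℕ)
    (HL : ℕ → Hb →L[ℂ] Hb)
    (hHL : ∀ (L : ℕ) (x : Db), HL L (incl x) = incl (QD L (ND (QD L x))))
    (V : ℕ → Db →ₗ[ℂ] Db)
    (hV : ∀ (L : ℕ) (x : Db),
      incl (V L x) = NormedSpace.exp ((-((t : ℂ) * Complex.I)) • HL L) (incl x)) :
    Tendsto
      (fun L : ℕ =>
        semin f k
          (((NormedSpace.exp (((t : ℂ) * Complex.I) • HL L)).toLinearMap
              ∘ₗ incl ∘ₗ aOp ∘ₗ V L)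
            - Complex.exp (-((t : ℂ) * Complex.I)) • (incl ∘ₗ aOp)))
      atTop (nhds 0) := by
  classical
  set c : ℂ := (t : ℂ) * Complex.I with hc
  clear_value c
  have HL_eb : ∀ L n : ℕ, HL L (eb n) = if n ≤ L then (n : ℂ) • eb n else 0 := by
    intro L n
    have h1 := hHL L (Finsupp.single n 1)
    rw [incl_single, one_smul] at h1
    rw [h1, QD_single]
    by_cases h : n ≤ L
    · rw [if_pos h, if_pos h, ND_single, map_smul, QD_single, if_pos h, map_smul, incl_single,
        one_smul]
    · rw [if_neg h, if_neg h]; simp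
  have exp_eb : ∀ (z : ℂ) (L n : ℕ),
      NormedSpace.exp (z • HL L) (eb n) = (if n ≤ L then Complex.exp (z * n) else 1) • eb n := by
    intro z L n
    by_cases h : n ≤ L
    · rw [if_pos h]
      exact exp_eigen _ _ _ (by rw [ContinuousLinearMap.smul_apply, HL_eb, if_pos h, smul_smul])
    · rw [if_neg h]
      have h0 : (z • HL L) (eb n) = (0 : ℂ) • eb n := by
        rw [ContinuousLinearMap.smul_apply, HL_eb, if_neg h, smul_zero, zero_smul]
      rw [exp_eigen _ _ _ h0, Complex.exp_zero]
  have V_single : ∀ L s : ℕ, V L (Finsupp.single s 1)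
      = (if s ≤ L then Complex.exp (-c * s) else 1) • Finsupp.single s 1 := by
    intro L s
    apply incl_inj
    rw [map_smul, incl_single, one_smul, hV, incl_single, one_smul, exp_eb]
  set coef : ℕ → ℕ → ℂ := fun L s => (Real.sqrt s : ℂ) *
    ((if s ≤ L then Complex.exp (-c * s) else 1) *
      (if s - 1 ≤ L then Complex.exp (c * ((s - 1 : ℕ) : ℂ)) else 1) - Complex.exp (-c))
    with hcoef
  clear_value coef
  set TL : ℕ → Db →ₗ[ℂ] Hb := fun L =>
    ((NormedSpace.exp (c • HL L)).toLinearMap ∘ₗ incl ∘ₗ aOp ∘ₗ V L)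
      - Complex.exp (-c) • (incl ∘ₗ aOp) with hTL
  clear_value TL
  have T_apply : ∀ L s : ℕ, TL L (Finsupp.single s 1) = coef L s • eb (s - 1) := by
    intro L s
    simp only [hTL, hcoef]
    simp only [LinearMap.sub_apply, LinearMap.comp_apply, LinearMap.smul_apply,
      ContinuousLinearMap.coe_coe, V_single, map_smul, aOp_single, incl_single, exp_eb]
    simp only [one_smul, smul_smul]
    rw [← sub_smul]
    congr 1
    ring
  have normT : ∀ L l s : ℕ, ‖sandwich (TL L) l s‖ = if l = s - 1 then ‖coef L s‖ else 0 := by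
    intro L l s
    rw [norm_sandwich, T_apply, norm_PiH_smul_eb]
  have habs1 : ∀ x : ℂ, x.re = 0 → ‖Complex.exp x‖ = 1 := by
    intro x hx
    rw [Complex.norm_exp, hx, Real.exp_zero]
  have coef_zero : ∀ L s : ℕ, s ≤ L → coef L s = 0 := by
    intro L s hs
    rcases Nat.eq_zero_or_pos s with rfl | hpos
    · simp [hcoef]
    · have h1 : s - 1 ≤ L := by omega
      simp only [hcoef]
      simp only [if_pos hs, if_pos h1]
      have hcast : ((s - 1 : ℕ) : ℂ) = (s : ℂ) - 1 := by
        have := Nat.cast_sub (R := ℂ) hpos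
        simpa using this
      rw [hcast, ← Complex.exp_add, show -c * (s : ℂ) + c * ((s : ℂ) - 1) = -c by ring]
      simp
  have coef_bound : ∀ L s : ℕ, ‖coef L s‖ ≤ 2 * s := by
    intro L s
    simp only [hcoef]
    rw [norm_mul]
    have hsq : ‖((Real.sqrt s : ℝ) : ℂ)‖ = Real.sqrt s := by
      rw [Complex.norm_of_nonneg (Real.sqrt_nonneg _)]
    have hb1 : ‖(if s ≤ L then Complex.exp (-c * s) else 1)‖ = 1 := by
      split_ifs with h
      · exact habs1 _ (by simp [hc])
      · simp
    have hb2 : ‖(if s - 1 ≤ L then Complex.exp (c * ((s - 1 : ℕ) : ℂ)) else 1)‖ = 1 := by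
      split_ifs with h
      · exact habs1 _ (by simp [hc])
      · simp
    have hb3 : ‖Complex.exp (-c)‖ = 1 := habs1 _ (by simp [hc])
    have h2 : ‖(if s ≤ L then Complex.exp (-c * s) else 1) *
        (if s - 1 ≤ L then Complex.exp (c * ((s - 1 : ℕ) : ℂ)) else 1) - Complex.exp (-c)‖
        ≤ 2 := by
      calc ‖_ - _‖ ≤ ‖(if s ≤ L then Complex.exp (-c * s) else 1) *
            (if s - 1 ≤ L then Complex.exp (c * ((s - 1 : ℕ) : ℂ)) else 1)‖
            + ‖Complex.exp (-c)‖ := norm_sub_le _ _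
        _ = 2 := by rw [norm_mul, hb1, hb2, hb3]; norm_num
    calc ‖((Real.sqrt s : ℝ) : ℂ)‖ * ‖_‖ ≤ Real.sqrt s * 2 := by
          rw [hsq]
          exact mul_le_mul_of_nonneg_left h2 (Real.sqrt_nonneg _)
      _ ≤ (s : ℝ) * 2 := by
          have := sqrt_nat_le s
          nlinarith [Real.sqrt_nonneg (s : ℝ)]
      _ = 2 * s := by ring
  have inner_sum : ∀ L l : ℕ,
      (∑' s : ℕ, ENNReal.ofReal (f l * (s : ℝ) ^ k * ‖sandwich (TL L) l s‖))
        = ENNReal.ofReal (f l * ((l + 1 : ℕ) : ℝ) ^ k * ‖coef L (l + 1)‖) := by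
    intro L l
    rw [tsum_eq_single (l + 1)]
    · rw [normT]
      simp
    · intro s hs
      rw [normT]
      by_cases h : l = s - 1
      · have hs0 : s = 0 := by omega
        subst hs0
        rw [if_pos h]
        have hz : coef L 0 = 0 := by simp only [hcoef]; simp
        simp [hz]
      · simp [h]
  set g : ℕ → ℝ := fun l => f l * ((l : ℝ) + 1) ^ (k + 1) * 2 with hg
  clear_value g
  have g_nonneg : ∀ l : ℕ, 0 ≤ g l := by
    intro l
    have hfl : 0 < f l := hf.pos _ (Set.mem_Ici.2 (Nat.cast_nonneg l))
    simp only [hg]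
    have : (0:ℝ) ≤ ((l : ℝ) + 1) ^ (k + 1) := by positivity
    nlinarith
  have term_le : ∀ L l : ℕ, ENNReal.ofReal (f l * ((l + 1 : ℕ) : ℝ) ^ k * ‖coef L (l + 1)‖)
      ≤ if l < L then 0 else ENNReal.ofReal (g l) := by
    intro L l
    by_cases h : l < L
    · rw [if_pos h, coef_zero L (l + 1) (by omega)]
      simp
    · rw [if_neg h]
      apply ENNReal.ofReal_le_ofReal
      have hfl : (0:ℝ) ≤ f l := (hf.pos _ (Set.mem_Ici.2 (Nat.cast_nonneg l))).le
      have hb := coef_bound L (l + 1)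
      push_cast at hb ⊢
      simp only [hg]
      calc f l * ((l : ℝ) + 1) ^ k * ‖coef L (l + 1)‖
          ≤ f l * ((l : ℝ) + 1) ^ k * (2 * ((l : ℝ) + 1)) := by
            have h0 : (0:ℝ) ≤ f l * ((l : ℝ) + 1) ^ k := mul_nonneg hfl (by positivity)
            exact mul_le_mul_of_nonneg_left hb h0
        _ = f l * ((l : ℝ) + 1) ^ (k + 1) * 2 := by ring
  have semin_le : ∀ L : ℕ, semin f k (TL L) ≤ ∑' m : ℕ, ENNReal.ofReal (g (m + L)) := by
    intro L
    rw [semin]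
    calc (∑' (l : ℕ) (s : ℕ), ENNReal.ofReal (f l * (s : ℝ) ^ k * ‖sandwich (TL L) l s‖))
        = ∑' l : ℕ, ENNReal.ofReal (f l * ((l + 1 : ℕ) : ℝ) ^ k * ‖coef L (l + 1)‖) :=
          tsum_congr (inner_sum L)
      _ ≤ ∑' l : ℕ, (if l < L then 0 else ENNReal.ofReal (g l)) :=
          ENNReal.tsum_le_tsum (term_le L)
      _ = ∑' m : ℕ, (if m + L < L then 0 else ENNReal.ofReal (g (m + L))) := by
          refine (Function.Injective.tsum_eq (add_left_injective L) ?_).symm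
          intro x hx
          rcases le_or_gt L x with h | h
          · exact ⟨x - L, by simp [Nat.sub_add_cancel h]⟩
          · simp [if_pos h] at hx
      _ = ∑' m : ℕ, ENNReal.ofReal (g (m + L)) := by
          refine tsum_congr fun m => ?_
          rw [if_neg (by omega)]
  have hg_sum : Summable g := by
    have hd := hf.decay (k + 3)
    have h1 : ∀ᶠ l : ℕ in atTop, ((l : ℝ)) ^ (k + 3) * f l < 1 :=
      tendsto_natCast_atTop_atTop.eventually (hd.eventually_lt_const one_pos)
    refine summable_of_isBigO_nat
      (g := fun l : ℕ => 1 / (l : ℝ) ^ 2) (Real.summable_one_div_nat_pow.mpr one_lt_two) ?_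
    rw [Asymptotics.isBigO_iff]
    refine ⟨2 ^ (k + 2), ?_⟩
    filter_upwards [h1, Filter.eventually_ge_atTop 1] with l hl hl1
    have hx1 : (1:ℝ) ≤ (l : ℝ) := by exact_mod_cast hl1
    have hx0 : (0:ℝ) < (l : ℝ) := by linarith
    have hfl : 0 < f l := hf.pos _ (Set.mem_Ici.2 (Nat.cast_nonneg l))
    have hfle : f l ≤ 1 / (l : ℝ) ^ (k + 3) := by
      rw [le_div_iff₀ (by positivity)]
      nlinarith
    rw [Real.norm_eq_abs, abs_of_nonneg (g_nonneg l), Real.norm_eq_abs,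
      abs_of_nonneg (by positivity)]
    simp only [hg]
    have h2 : ((l : ℝ) + 1) ^ (k + 1) ≤ (2 * (l : ℝ)) ^ (k + 1) :=
      pow_le_pow_left₀ (by positivity) (by linarith) _
    have hpow : (l : ℝ) ^ (k + 1) / (l : ℝ) ^ (k + 3) = 1 / (l : ℝ) ^ 2 := by
      rw [div_eq_div_iff (by positivity) (by positivity)]
      ring
    calc f l * ((l : ℝ) + 1) ^ (k + 1) * 2
        ≤ (1 / (l : ℝ) ^ (k + 3)) * ((2 * (l : ℝ)) ^ (k + 1)) * 2 := by
          apply mul_le_mul_of_nonneg_right _ (by norm_num)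
          exact mul_le_mul hfle h2 (by positivity) (by positivity)
      _ = 2 ^ (k + 2) * ((l : ℝ) ^ (k + 1) / (l : ℝ) ^ (k + 3)) := by
          rw [mul_pow]; ring
      _ = 2 ^ (k + 2) * (1 / (l : ℝ) ^ 2) := by rw [hpow]
  have htail : Tendsto (fun L : ℕ => ∑' m : ℕ, ENNReal.ofReal (g (m + L))) atTop (nhds 0) := by
    exact ENNReal.tendsto_sum_nat_add (fun n => ENNReal.ofReal (g n))
      (by rw [← ENNReal.ofReal_tsum_of_nonneg g_nonneg hg_sum]; exact ENNReal.ofReal_ne_top)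
  have hmain : Tendsto (fun L : ℕ => semin f k (TL L)) atTop (nhds 0) :=
    tendsto_of_tendsto_of_tendsto_of_le_of_le tendsto_const_nhds htail
      (fun L => zero_le) semin_le
  simp only [hTL] at hmain
  exact hmain


end
end

section
/- For every L ≥ 1 and every integer m ≥ 1, the m-fold multiple commutator of the regularized Hamiltonian with the annihilation operator satisfies [H_L, a]_m = (L^m Π_L + (−1)^m Q_{L−1}) a as linear maps on D. -/
open Filter Topology
open scoped ENNReal

noncomputable section

noncomputable section

/-- Iterated commutator of linear maps on `D`: `[X,Y]₀ = Y`, `[X,Y]ₘ = X[X,Y]_{m-1} - [X,Y]_{m-1}X`. -/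
def itComm (X Y : Db →ₗ[ℂ] Db) : ℕ → Db →ₗ[ℂ] Db
  | 0 => Y
  | m + 1 => X * itComm X Y m - itComm X Y m * X

/-! Both `H_L` and the operators `Π_l`, `Q_L` are diagonal in the basis `eₙ`, and `a` is a weighted
lowering operator. A diagonal operator with eigenvalues `h` conjugates the lowering operator with
weights `w` into the one with weights `(h (n - 1) - h n) * w n`, so `[H_L, a]ₘ` lowers `eₙ` with weight
`(h (n - 1) - h n) ^ m * √n`, and for `h n = if n ≤ L then n else 0` the difference `h (n - 1) - h n`
is `-1` below `L + 1`, `L` at `n = L + 1` and `0` above. -/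

section WeightedShifts

variable {R : Type*} [CommRing R]

def diagOp (h : ℕ → R) : (ℕ →₀ R) →ₗ[R] (ℕ →₀ R) :=
  Finsupp.lsum R fun n => h n • Finsupp.lsingle n

def lowerOp (w : ℕ → R) : (ℕ →₀ R) →ₗ[R] (ℕ →₀ R) :=
  Finsupp.lsum R fun n => w n • Finsupp.lsingle (n - 1)

@[simp]
lemma diagOp_single (h : ℕ → R) (n : ℕ) (b : R) :
    diagOp h (Finsupp.single n b) = h n • Finsupp.single n b := by
  simp [diagOp, Finsupp.smul_single]

@[simp]
lemma lowerOp_single (w : ℕ → R) (n : ℕ) (b : R) :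
    lowerOp w (Finsupp.single n b) = w n • Finsupp.single (n - 1) b := by
  simp [lowerOp, Finsupp.smul_single]

lemma diagOp_add (g h : ℕ → R) : diagOp (g + h) = diagOp g + diagOp h := by
  ext n : 2
  simp [add_smul]

lemma diagOp_smul (c : R) (h : ℕ → R) : diagOp (c • h) = c • diagOp h := by
  ext n : 2
  simp [mul_smul]

lemma diagOp_mul_diagOp (g h : ℕ → R) : diagOp g * diagOp h = diagOp (g * h) := by
  ext n : 2
  simp

lemma diagOp_mul_lowerOp (h w : ℕ → R) :
    diagOp h * lowerOp w = lowerOp fun n => h (n - 1) * w n := by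
  ext n : 2
  simp [mul_comm]

lemma diagOp_commutator_lowerOp (h w : ℕ → R) :
    diagOp h * lowerOp w - lowerOp w * diagOp h = lowerOp fun n => (h (n - 1) - h n) * w n := by
  refine Finsupp.lhom_ext fun n b => ?_
  simp only [LinearMap.sub_apply, Module.End.mul_apply, diagOp_single, lowerOp_single,
    Finsupp.smul_single, smul_eq_mul, ← Finsupp.single_sub]
  congr 1
  ring

end WeightedShifts

lemma itComm_diagOp_lowerOp (h w : ℕ → ℂ) (m : ℕ) :
    itComm (diagOp h) (lowerOp w) m = lowerOp fun n => (h (n - 1) - h n) ^ m * w n := by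
  induction m with
  | zero => simp [itComm]
  | succ m ih =>
    rw [itComm, ih, diagOp_commutator_lowerOp]
    simp only [pow_succ, mul_assoc, mul_left_comm]

lemma aOp_eq_lowerOp : aOp = lowerOp fun n => (Real.sqrt n : ℂ) := rfl

lemma PiD_eq_diagOp (l : ℕ) : PiD l = diagOp fun n => if n = l then 1 else 0 := by
  ext n : 2
  by_cases hn : n = l <;> simp [PiD, hn]

lemma QD_eq_diagOp (L : ℕ) : QD L = diagOp fun n => if n ≤ L then 1 else 0 := by
  ext n : 2
  simp [QD, PiD_eq_diagOp, ite_smul]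

lemma ND_eq_diagOp : ND = diagOp fun n => (n : ℂ) := by
  ext n : 2
  rcases n with _ | n
  · simp [ND, aOp_eq_lowerOp]
  · have hsq : (Real.sqrt (n + 1) : ℂ) * Real.sqrt (n + 1) = n + 1 := by
      rw [← Complex.ofReal_mul, Real.mul_self_sqrt (by positivity)]
      push_cast; ring
    simp [ND, aOp_eq_lowerOp, adOp, Finsupp.smul_single, hsq]

lemma regularizedHamiltonian_eq_diagOp (L : ℕ) :
    QD L * ND * QD L = diagOp fun n => if n ≤ L then (n : ℂ) else 0 := by
  rw [QD_eq_diagOp, ND_eq_diagOp, diagOp_mul_diagOp, diagOp_mul_diagOp]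
  congr 1
  funext n
  by_cases hn : n ≤ L <;> simp [hn]

/-- for every `L ≥ 1` and `m ≥ 1`,
`[H_L, a]ₘ = (Lᵐ Π_L + (-1)ᵐ Q_{L-1}) a` as linear maps on `D`, where `H_L = Q_L N Q_L`. -/
theorem stmt4 (L : ℕ) (hL : 1 ≤ L) (m : ℕ) (hm : 1 ≤ m) :
    itComm (QD L * ND * QD L) aOp m
      = ((L : ℂ) ^ m • PiD L + (-1 : ℂ) ^ m • QD (L - 1)) * aOp := by
  rw [regularizedHamiltonian_eq_diagOp, aOp_eq_lowerOp, itComm_diagOp_lowerOp, PiD_eq_diagOp,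
    QD_eq_diagOp, ← diagOp_smul, ← diagOp_smul, ← diagOp_add, diagOp_mul_lowerOp]
  congr 1
  funext n
  rcases n with _ | n
  · simp -- the weight `√0` of `a` vanishes
  · obtain hn | rfl | hn := lt_trichotomy n L
    · simp [hn.le, hn.ne, Nat.le_sub_one_of_lt hn, Nat.succ_le_of_lt hn]
    · simp [show ¬ n ≤ n - 1 by omega]
    · simp [show ¬ n + 1 ≤ L by omega, show ¬ n ≤ L by omega, show n ≠ L by omega,
        show ¬ n ≤ L - 1 by omega, zero_pow (by omega : m ≠ 0)]

end
end
end
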